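/- arXiv:1903.09822 — 4 statements merged into one kernel-verified Lean document; each statement's English description precedes it below -/
import Mathlib

section
/- Let f : ℝ^d → [0,1] be a randomized function (Markov kernel) such that for all neighboring inputs x, x' with ‖x - x'‖_p ≤ 1 and all measurable sets O, P(f(x) ∈ O) ≤ e^ε P(f(x') ∈ O). Then for all α with ‖α‖_p ≤ 1, E[f(x)] ≤ e^ε E[f(x+α)]. -/
open MeasureTheory

/-- Expected-output stability of an ε-DP randomized function `f : ℝ^d → [0,1]`
(w.r.t. an ℓp-norm metric): if `P(f(x) ∈ O) ≤ e^ε P(f(x') ∈ O)` for all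
`‖x - x'‖_p ≤ 1`, then `E[f(x)] ≤ e^ε E[f(x+α)]` for all `‖α‖_p ≤ 1`. -/
theorem stmt_2 (d : ℕ) (p : ENNReal) [Fact (1 ≤ p)]
    (μ : PiLp p (fun _ : Fin d => ℝ) → Measure ℝ)
    [∀ x, IsProbabilityMeasure (μ x)]
    (hsupp : ∀ x, μ x (Set.Icc (0 : ℝ) 1)ᶜ = 0)
    (ε : ℝ)
    (hDP : ∀ x x' : PiLp p (fun _ : Fin d => ℝ), ‖x - x'‖ ≤ 1 →
      ∀ O : Set ℝ, MeasurableSet O → μ x O ≤ ENNReal.ofReal (Real.exp ε) * μ x' O)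
    (x α : PiLp p (fun _ : Fin d => ℝ)) (hα : ‖α‖ ≤ 1) :
    ∫ t, t ∂(μ x) ≤ Real.exp ε * ∫ t, t ∂(μ (x + α)) := by
  have hae : ∀ y, ∀ᵐ t ∂(μ y), t ∈ Set.Icc (0:ℝ) 1 := by
    intro y
    rw [MeasureTheory.ae_iff]
    simpa only [Set.compl_def, Set.mem_Icc] using hsupp y
  have hnn : ∀ y, 0 ≤ᵐ[μ y] (fun t : ℝ => t) := fun y =>
    (hae y).mono (fun t ht => ht.1)
  have hmeas : ∀ y, AEStronglyMeasurable (fun t : ℝ => t) (μ y) :=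
    fun y => aestronglyMeasurable_id
  have hrepr : ∀ y, ∫ t, t ∂(μ y)
      = (∫⁻ t, ENNReal.ofReal t ∂(μ y)).toReal := fun y =>
    integral_eq_lintegral_of_nonneg_ae (hnn y) (hmeas y)
  have hlayer : ∀ y, ∫⁻ t, ENNReal.ofReal t ∂(μ y)
      = ∫⁻ t in Set.Ioi (0:ℝ), μ y {a | t < a} := fun y =>
    lintegral_eq_lintegral_meas_lt (μ y) (hnn y) aemeasurable_id
  have hnear : ‖x - (x + α)‖ ≤ 1 := by
    simpa [norm_neg] using hα
  have hkey : ∫⁻ t, ENNReal.ofReal t ∂(μ x)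
      ≤ ENNReal.ofReal (Real.exp ε) * ∫⁻ t, ENNReal.ofReal t ∂(μ (x + α)) := by
    rw [hlayer, hlayer, ← lintegral_const_mul' _ _ ENNReal.ofReal_ne_top]
    refine lintegral_mono fun t => ?_
    have : {a : ℝ | t < a} = Set.Ioi t := rfl
    rw [this]
    exact hDP x (x + α) hnear _ measurableSet_Ioi
  have hfin : ∫⁻ t, ENNReal.ofReal t ∂(μ (x + α)) ≤ 1 := by
    calc ∫⁻ t, ENNReal.ofReal t ∂(μ (x + α)) ≤ ∫⁻ _, 1 ∂(μ (x + α)) := by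
          refine lintegral_mono_ae ((hae (x + α)).mono fun t ht => ?_)
          simpa using ENNReal.ofReal_le_ofReal ht.2
      _ = 1 := by simp
  have hne : ENNReal.ofReal (Real.exp ε) * ∫⁻ t, ENNReal.ofReal t ∂(μ (x + α)) ≠ ⊤ :=
    ENNReal.mul_ne_top ENNReal.ofReal_ne_top (lt_of_le_of_lt hfin ENNReal.one_lt_top).ne
  rw [hrepr, hrepr]
  calc (∫⁻ t, ENNReal.ofReal t ∂(μ x)).toReal
      ≤ (ENNReal.ofReal (Real.exp ε) * ∫⁻ t, ENNReal.ofReal t ∂(μ (x + α))).toReal :=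
        ENNReal.toReal_mono hne hkey
    _ = Real.exp ε * (∫⁻ t, ENNReal.ofReal t ∂(μ (x + α))).toReal := by
        rw [ENNReal.toReal_mul, ENNReal.toReal_ofReal (Real.exp_nonneg ε)]
end

section
/- Suppose F : ℝ^d → [0,1]^K is a randomized classifier score function satisfying, for each class i and all ‖α‖_p ≤ 1, e^{-ε} E[F_i(x+α)] ≤ E[F_i(x)] ≤ e^{ε} E[F_i(x+α)], where ε = ∑_{s=1}^S ε_s. If for some class k we have E[F_k(x)] > e^{2ε} max_{i ≠ k} E[F_i(x)], then for all α with ‖α‖_p ≤ 1, E[F_k(x+α)] > max_{i ≠ k} E[F_i(x+α)]. -/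
/-- Theorem 4 (Composition of Robustness, with exact expectations): if the
expected scores `E[F_i(·)]` of a randomized classifier with values in `[0,1]`
satisfy the two-sided DP-style stability with budget `ε = ∑ ε_s` under
ℓp-perturbations of size ≤ 1, and class `k` has the margin
`E[F_k(x)] > e^{2ε} max_{i≠k} E[F_i(x)]`, then the predicted label is robust:
`E[F_k(x+α)] > max_{i≠k} E[F_i(x+α)]` for every `‖α‖_p ≤ 1`. -/
theorem stmt_4 (d K S : ℕ) (p : ENNReal) [Fact (1 ≤ p)]
    (E : PiLp p (fun _ : Fin d => ℝ) → Fin K → ℝ)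
    (hrange : ∀ x i, E x i ∈ Set.Icc (0 : ℝ) 1)
    (εs : Fin S → ℝ)
    (x : PiLp p (fun _ : Fin d => ℝ)) (k : Fin K)
    (hstab : ∀ (i : Fin K) (α : PiLp p (fun _ : Fin d => ℝ)), ‖α‖ ≤ 1 →
      Real.exp (-(∑ s, εs s)) * E (x + α) i ≤ E x i ∧
        E x i ≤ Real.exp (∑ s, εs s) * E (x + α) i)
    (hmargin : ∀ i : Fin K, i ≠ k →
      E x k > Real.exp (2 * ∑ s, εs s) * E x i) :
    ∀ α : PiLp p (fun _ : Fin d => ℝ), ‖α‖ ≤ 1 →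
      ∀ i : Fin K, i ≠ k → E (x + α) k > E (x + α) i := by
  intro α hα i hik
  set ε := ∑ s, εs s with hε
  have h1 := (hstab k α hα).2
  have h2 := (hstab i α hα).1
  have hm := hmargin i hik
  have hepos : (0:ℝ) < Real.exp ε := Real.exp_pos _
  -- E (x+α) k ≥ exp (-ε) * E x k
  have hk : Real.exp (-ε) * E x k ≤ E (x + α) k := by
    have := mul_le_mul_of_nonneg_left h1 (le_of_lt (Real.exp_pos (-ε)))
    rwa [← mul_assoc, ← Real.exp_add, neg_add_cancel, Real.exp_zero, one_mul] at this
  -- E (x+α) i ≤ exp ε * E x i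
  have hi : E (x + α) i ≤ Real.exp ε * E x i := by
    have := mul_le_mul_of_nonneg_left h2 (le_of_lt hepos)
    rwa [← mul_assoc, ← Real.exp_add, add_neg_cancel, Real.exp_zero, one_mul] at this
  have key : Real.exp ε * E x i < Real.exp (-ε) * E x k := by
    have := mul_lt_mul_of_pos_left hm (Real.exp_pos (-ε))
    calc Real.exp ε * E x i
        = Real.exp (-ε) * (Real.exp (2*ε) * E x i) := by
          rw [← mul_assoc, ← Real.exp_add]; ring_nf
      _ < Real.exp (-ε) * E x k := this
  linarith
end

section
/- Let F : ℝ^d → [0,1]^K satisfy, for all classes i and all ‖α‖_p ≤ t (for every t > 0): E[F_i(x)] ≤ e^{(ε_r/κ + ε_r/φ)·t} E[F_i(x+α)] and E[F_i(x+α)] ≤ e^{(ε_r/κ + ε_r/φ)·t} E[F_i(x)], where κ, φ, ε_r > 0. If E[F_k(x)] > e^{2ε_r} max_{i ≠ k} E[F_i(x)], then for all α with ‖α‖_p ≤ κφ/(κ+φ), E[F_k(x+α)] > max_{i ≠ k} E[F_i(x+α)]. -/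
/-- Corollary 1 (StoBatch robustness): if the expected scores satisfy the
two-sided DP-style stability with per-unit-radius budget `ε_r/κ + ε_r/φ`
(scaled linearly in the attack radius `t`), and class `k` has the margin
`E[F_k(x)] > e^{2ε_r} max_{i≠k} E[F_i(x)]`, then the prediction is robust to
all perturbations of ℓp-size at most `κφ/(κ+φ)`. -/
theorem stmt_5 (d K : ℕ) (p : ENNReal) [Fact (1 ≤ p)]
    (E : PiLp p (fun _ : Fin d => ℝ) → Fin K → ℝ)
    (hrange : ∀ x i, E x i ∈ Set.Icc (0 : ℝ) 1)
    (κ φ εr : ℝ) (hκ : 0 < κ) (hφ : 0 < φ) (hεr : 0 < εr)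
    (x : PiLp p (fun _ : Fin d => ℝ)) (k : Fin K)
    (hstab : ∀ (i : Fin K) (t : ℝ), 0 < t →
      ∀ α : PiLp p (fun _ : Fin d => ℝ), ‖α‖ ≤ t →
        E x i ≤ Real.exp ((εr / κ + εr / φ) * t) * E (x + α) i ∧
          E (x + α) i ≤ Real.exp ((εr / κ + εr / φ) * t) * E x i)
    (hmargin : ∀ i : Fin K, i ≠ k → E x k > Real.exp (2 * εr) * E x i) :
    ∀ α : PiLp p (fun _ : Fin d => ℝ), ‖α‖ ≤ κ * φ / (κ + φ) →
      ∀ i : Fin K, i ≠ k → E (x + α) k > E (x + α) i := by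
  intro α hα i hi
  have ht : (0 : ℝ) < κ * φ / (κ + φ) := by positivity
  have hexp : (εr / κ + εr / φ) * (κ * φ / (κ + φ)) = εr := by
    field_simp
    ring
  have h1 := (hstab k _ ht α hα).1
  have h2 := (hstab i _ ht α hα).2
  rw [hexp] at h1 h2
  have hm := hmargin i hi
  have hpos : (0 : ℝ) < Real.exp εr := Real.exp_pos _
  -- e^εr * E(x+α) k ≥ E x k > e^{2εr} E x i ≥ e^{εr} * E(x+α) i
  have key : Real.exp εr * E (x + α) k > Real.exp εr * E (x + α) i := by
    calc Real.exp εr * E (x + α) k ≥ E x k := h1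
      _ > Real.exp (2 * εr) * E x i := hm
      _ = Real.exp εr * (Real.exp εr * E x i) := by
          rw [← mul_assoc, ← Real.exp_add]; ring_nf
      _ ≥ Real.exp εr * E (x + α) i := by
          exact mul_le_mul_of_nonneg_left h2 hpos.le
  exact lt_of_mul_lt_mul_left key hpos.le
end

section
/- Let Ê_lb, Ê_ub : K → ℝ with Ê_lb(k) ≤ E(k) ≤ Ê_ub(k) for all classes k ∈ K (with probability ≥ η), and suppose for some k: Ê_lb(k) > e^{2ε} max_{i≠k} Ê_ub(i) for some ε > 0. If moreover for all i and all ‖α‖_p ≤ 1: e^{−ε} E_α(i) ≤ E(i) ≤ e^{ε} E_α(i), where E_α(i) denotes the expected score of class i at input x+α, then with probability ≥ η: E_α(k) > max_{i≠k} E_α(i). -/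
/-- Monte Carlo version of the robustness certification check: if
`Ê_lb(i) ≤ E(i) ≤ Ê_ub(i)` for all classes, class `k` satisfies the empirical
margin `Ê_lb(k) > e^{2ε} max_{i≠k} Ê_ub(i)`, and the expected scores satisfy
the two-sided ε-stability under ℓp-perturbations of size ≤ 1, then the true
margin holds at every perturbed input: `E_α(k) > max_{i≠k} E_α(i)`. -/
theorem stmt_17 (d K : ℕ) (p : ENNReal) [Fact (1 ≤ p)]
    (E : PiLp p (fun _ : Fin d => ℝ) → Fin K → ℝ)
    (Elb Eub : Fin K → ℝ) (ε : ℝ) (hε : 0 < ε)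
    (x : PiLp p (fun _ : Fin d => ℝ)) (k : Fin K)
    (hbounds : ∀ i : Fin K, Elb i ≤ E x i ∧ E x i ≤ Eub i)
    (hmargin : ∀ i : Fin K, i ≠ k → Elb k > Real.exp (2 * ε) * Eub i)
    (hstab : ∀ (i : Fin K) (α : PiLp p (fun _ : Fin d => ℝ)), ‖α‖ ≤ 1 →
      Real.exp (-ε) * E (x + α) i ≤ E x i ∧ E x i ≤ Real.exp ε * E (x + α) i) :
    ∀ α : PiLp p (fun _ : Fin d => ℝ), ‖α‖ ≤ 1 →
      ∀ i : Fin K, i ≠ k → E (x + α) k > E (x + α) i := by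
  intro α hα i hi
  obtain ⟨hk1, hk2⟩ := hstab k α hα
  obtain ⟨hi1, hi2⟩ := hstab i α hα
  have hm := hmargin i hi
  have hb := hbounds k
  have h2 : Real.exp (2 * ε) = Real.exp ε * Real.exp ε := by
    rw [two_mul, Real.exp_add]
  have hne : Real.exp (-ε) * Real.exp ε = 1 := by
    rw [← Real.exp_add]; simp
  have hpos : 0 < Real.exp ε := Real.exp_pos ε
  have hpos' : 0 < Real.exp (-ε) := Real.exp_pos (-ε)
  have e1 : ∀ y : ℝ, Real.exp (-ε) * (Real.exp ε * y) = y := fun y => by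
    rw [← mul_assoc, hne, one_mul]
  have e2 : ∀ y : ℝ, Real.exp ε * (Real.exp (-ε) * y) = y := fun y => by
    rw [← mul_assoc, mul_comm (Real.exp ε), hne, one_mul]
  have hAk : Real.exp (-ε) * Elb k ≤ E (x + α) k := by
    have h1 := mul_le_mul_of_nonneg_left hk2 hpos'.le
    rw [e1] at h1
    have h2' := mul_le_mul_of_nonneg_left hb.1 hpos'.le
    linarith
  have hAi : E (x + α) i ≤ Real.exp ε * Eub i := by
    have h1 := mul_le_mul_of_nonneg_left hi1 hpos.le
    rw [e2] at h1
    have h2' := mul_le_mul_of_nonneg_left (hbounds i).2 hpos.le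
    linarith
  have hgt : Real.exp ε * Eub i < Real.exp (-ε) * Elb k := by
    have h1 := mul_lt_mul_of_pos_left hm hpos'
    rw [h2, ← mul_assoc, ← mul_assoc, hne, one_mul] at h1
    linarith
  linarith
end
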